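/- arXiv:1703.10702 — 2 statements merged into one kernel-verified Lean document; each statement's English description precedes it below -/
import Mathlib

section
/- Let G be a simple graph that is the graph of a simple d-polytope with 3d vertices (d ≥ 3, d even). If some facet F has 3d-2 vertices, then counting edges leaving F (exactly 3d-2, one per vertex of F) against edges incident to the two external vertices (at most 2d-2 after accounting for the possible edge between them, and exactly 2(d-1) if they are adjacent) yields 2d-2 = 3d-2, which is impossible for d > 0. Hence no facet of a simple d-polytope with 3d vertices has 3d-2 vertices. -/
/-!
Each of the `3d - 2` vertices of `F` sends exactly one edge out of `F`, and all these edges end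
at one of the two vertices outside `F`, which together have degree `2d`. Hence `3d - 2 ≤ 2d`,
i.e. `d ≤ 2`.
-/

open Finset

namespace SimpleGraph

variable {V : Type*} [Fintype V] [DecidableEq V] (G : SimpleGraph V) [DecidableRel G.Adj]

theorem sum_card_neighborFinset_sdiff_eq (s : Finset V) :
    ∑ v ∈ s, #(G.neighborFinset v \ s) = ∑ u ∈ sᶜ, #(G.neighborFinset u ∩ s) := by
  have hout : ∀ v, G.neighborFinset v \ s = bipartiteAbove G.Adj sᶜ v := fun v => by
    ext u; simp [and_comm]
  have hin : ∀ u, G.neighborFinset u ∩ s = bipartiteBelow G.Adj s u := fun u => by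
    ext v; simp [G.adj_comm, and_comm]
  simp only [hout, hin]
  exact sum_card_bipartiteAbove_eq_sum_card_bipartiteBelow G.Adj

theorem sum_card_neighborFinset_sdiff_le {d : ℕ} (hreg : G.IsRegularOfDegree d) (s : Finset V) :
    ∑ v ∈ s, #(G.neighborFinset v \ s) ≤ #sᶜ * d := by
  rw [sum_card_neighborFinset_sdiff_eq]
  calc ∑ u ∈ sᶜ, #(G.neighborFinset u ∩ s)
      ≤ ∑ u ∈ sᶜ, #(G.neighborFinset u) := sum_le_sum fun u _ => card_le_card inter_subset_left
    _ = #sᶜ * d := by simp [hreg.degree_eq, mul_comm]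

end SimpleGraph

theorem stmt_14_general {V : Type*} [Fintype V] [DecidableEq V] (G : SimpleGraph V)
    [DecidableRel G.Adj] (d : ℕ) (hd : 3 ≤ d)
    (hreg : G.IsRegularOfDegree d) (hcard : Fintype.card V = 3 * d)
    (F : Finset V) (hF : F.card = 3 * d - 2)
    (hshep : ∀ v ∈ F, (G.neighborFinset v \ F).card = 1) : False := by
  have hcompl : #Fᶜ = 2 := by rw [card_compl]; omega
  have hcount : #F ≤ 2 * d := by
    calc #F = ∑ v ∈ F, #(G.neighborFinset v \ F) := by rw [sum_congr rfl hshep, card_eq_sum_ones]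
      _ ≤ #Fᶜ * d := G.sum_card_neighborFinset_sdiff_le hreg F
      _ = 2 * d := by rw [hcompl]
  omega

/-- Let `G` be the graph of a simple `d`-polytope with `3d` vertices (`d ≥ 3`, `d` even),
so `G` is `d`-regular.  If some facet `F` had `3d - 2` vertices, then — since every vertex
of `F` has exactly one neighbour outside `F` — counting the `3d - 2` edges leaving `F`
against the edges incident to the two external vertices yields a contradiction.  Hence no
facet of a simple `d`-polytope with `3d` vertices has `3d - 2` vertices. -/
theorem stmt_14 {V : Type*} [Fintype V] [DecidableEq V] (G : SimpleGraph V)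
    [DecidableRel G.Adj] (d : ℕ) (hd : 3 ≤ d) (heven : Even d)
    (hreg : G.IsRegularOfDegree d) (hcard : Fintype.card V = 3 * d)
    (F : Finset V) (hF : F.card = 3 * d - 2)
    (hshep : ∀ v ∈ F, (G.neighborFinset v \ F).card = 1) : False :=
  stmt_14_general G d hd hreg hcard F hF hshep
end

section
/- Suppose a 5-polytope P has 13 vertices, 35 edges, and a facet F with 7 vertices and 17 or more edges. Let e_b be the number of edges between F and the 6 vertices outside F, and e_a the number of edges among those 6 vertices. Then e_a + e_b ≤ 18 and 2e_a + e_b ≥ 30 force e_a ≥ 12 and e_b ≤ 6; but e_b ≥ 7 (each vertex of F has a neighbour outside F), a contradiction. Hence no facet of such a P has 7 vertices and ≥ 17 edges. -/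
/-!
Count degrees of the 13 vertices, which sum to `2 · 35 = 70`. A vertex of `F` lies on its edges
inside `F` and on at least one edge leaving `F`, so the degrees in `F` sum to at least
`2 · 17 + 7 = 41`; the six vertices outside `F` contribute at least `6 · 5 = 30`, and
`41 + 30 > 70`.
-/

open Finset

namespace SimpleGraph

variable {V : Type*} [Fintype V] [DecidableEq V] (G : SimpleGraph V) [DecidableRel G.Adj]

def edgeFinsetWithin (s : Finset V) : Finset (Sym2 V) :=
  {e ∈ G.edgeFinset | ∀ v ∈ e, v ∈ s}

theorem ncard_edgeSet_within (s : Finset V) :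
    {e ∈ G.edgeSet | ∀ v ∈ e, v ∈ s}.ncard = #(G.edgeFinsetWithin s) := by
  rw [← Set.ncard_coe_finset, edgeFinsetWithin, coe_filter]
  simp only [mem_edgeFinset]

theorem sum_card_incident_edgeFinsetWithin (s : Finset V) :
    ∑ v ∈ s, #{e ∈ G.edgeFinsetWithin s | v ∈ e} = 2 * #(G.edgeFinsetWithin s) := by
  have hends : ∀ e ∈ G.edgeFinsetWithin s, #{v ∈ s | v ∈ e} = 2 := by
    intro e he
    obtain ⟨he, hes⟩ := mem_filter.mp he
    rw [← Sym2.card_toFinset_of_not_isDiag e (G.not_isDiag_of_mem_edgeSet (mem_edgeFinset.mp he))]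
    congr 1
    ext v
    simpa using hes v
  calc ∑ v ∈ s, #{e ∈ G.edgeFinsetWithin s | v ∈ e}
      = ∑ e ∈ G.edgeFinsetWithin s, #{v ∈ s | v ∈ e} :=
        sum_card_bipartiteAbove_eq_sum_card_bipartiteBelow (fun v e => v ∈ e)
    _ = 2 * #(G.edgeFinsetWithin s) := by
        rw [sum_congr rfl hends, sum_const, smul_eq_mul, mul_comm]

theorem card_incident_edgeFinsetWithin_lt_degree {s : Finset V} {v : V}
    (hv : ∃ w, w ∉ s ∧ G.Adj v w) : #{e ∈ G.edgeFinsetWithin s | v ∈ e} < G.degree v := by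
  obtain ⟨w, hw, hvw⟩ := hv
  rw [← card_incidenceFinset_eq_degree, incidenceFinset_eq_filter]
  refine card_lt_card ((ssubset_iff_of_subset ?_).mpr ⟨s(v, w), ?_, ?_⟩)
  · exact filter_subset_filter _ (filter_subset _ _)
  · simpa using hvw
  · simp [edgeFinsetWithin, hw]

theorem two_mul_card_edgeFinsetWithin_add_card_le_sum_degree {s : Finset V}
    (hs : ∀ v ∈ s, ∃ w, w ∉ s ∧ G.Adj v w) :
    2 * #(G.edgeFinsetWithin s) + #s ≤ ∑ v ∈ s, G.degree v := by
  rw [← sum_card_incident_edgeFinsetWithin, card_eq_sum_ones, ← sum_add_distrib]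
  exact sum_le_sum fun v hv => G.card_incident_edgeFinsetWithin_lt_degree (hs v hv)

end SimpleGraph

open SimpleGraph in
/-- Suppose a 5-polytope `P` has 13 vertices, 35 edges, and a facet `F` with 7 vertices
and 17 or more edges.  Let `e_b` be the number of edges between `F` and the 6 vertices
outside `F` (each of degree at least 5), and `e_a` the number of edges among those 6
vertices.  Then `e_a + e_b ≤ 18` and `2 e_a + e_b ≥ 30` force `e_a ≥ 12` and `e_b ≤ 6`;
but `e_b ≥ 7` since each vertex of `F` has a neighbour outside `F` — a contradiction.
Hence no facet of such a `P` has 7 vertices and at least 17 edges. -/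
theorem stmt_18 {V : Type*} [Fintype V] (G : SimpleGraph V) [DecidableRel G.Adj]
    (hV : Fintype.card V = 13) (hE : Nat.card G.edgeSet = 35)
    (F : Finset V) (hF : F.card = 7)
    (hFedges : 17 ≤ {e ∈ G.edgeSet | ∀ v ∈ e, v ∈ F}.ncard)
    (hdeg : ∀ v : V, v ∉ F → 5 ≤ G.degree v)
    (hout : ∀ v ∈ F, ∃ w, w ∉ F ∧ G.Adj v w) : False := by
  classical
  have htotal : ∑ v, G.degree v = 70 := by
    rw [sum_degrees_eq_twice_card_edges, edgeFinset_card, ← Nat.card_eq_fintype_card, hE]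
  have hinside : 2 * 17 + 7 ≤ ∑ v ∈ F, G.degree v := by
    rw [ncard_edgeSet_within] at hFedges
    have := G.two_mul_card_edgeFinsetWithin_add_card_le_sum_degree hout
    omega
  have houtside : 6 * 5 ≤ ∑ v ∈ Fᶜ, G.degree v := by
    have hcard : #Fᶜ = 6 := by rw [card_compl, hV, hF]
    rw [← hcard, ← smul_eq_mul, ← sum_const]
    exact sum_le_sum fun v hv => hdeg v (mem_compl.mp hv)
  have := sum_add_sum_compl F (G.degree ·)
  omega
end
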